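/- Let τ be the ℝ-algebra endomorphism of the polynomial ring over ℝ in the variables x_i, y_i (i ∈ ZMod n) determined by τ(x_i) = x_{1−i} and τ(y_i) = y_{−i}. Then τ(O_k) = O_k for every k with 1 ≤ k ≤ ⌊n/2⌋. -/

import Mathlib

open MvPolynomial

/-- The monomial `X_i = x_i y_i x_{i+1}` (`Sum.inl i ↦ x_i`, `Sum.inr i ↦ y_i`). -/
noncomputable def XmonO (n : ℕ) (i : ZMod n) : MvPolynomial (ZMod n ⊕ ZMod n) ℝ :=
  X (Sum.inl i) * X (Sum.inr i) * X (Sum.inl (i + 1))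

/-- Admissibility of the monomial `∏_{i ∈ S} X_i · ∏_{j ∈ T} x_j`: no two of the
factors are consecutive.  (`X_i, X_j` are consecutive iff `j - i ∈ {-2,-1,0,1,2}`;
`X_i, x_j` are consecutive iff `j - i ∈ {-1,0,1,2}`; `x_j, x_{j'}` are consecutive
iff `j' - j ∈ {-1,1}`.) -/
def AdmissibleO (n : ℕ) (S T : Finset (ZMod n)) : Prop :=
  (∀ i ∈ S, ∀ j ∈ S, i ≠ j → j - i ≠ 1 ∧ j - i ≠ 2) ∧
  (∀ i ∈ S, ∀ j ∈ T, j - i ≠ -1 ∧ j - i ≠ 0 ∧ j - i ≠ 1 ∧ j - i ≠ 2) ∧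
  (∀ j ∈ T, ∀ j' ∈ T, j ≠ j' → j' - j ≠ 1)

open scoped Classical in
/-- The monodromy invariant `O_k = ∑_{|O|=k} sign(O)·O`, the sum over all
admissible monomials of weight `k`. -/
noncomputable def Opoly (n : ℕ) [NeZero n] (k : ℕ) : MvPolynomial (ZMod n ⊕ ZMod n) ℝ :=
  ∑ S : Finset (ZMod n), ∑ T : Finset (ZMod n),
    if AdmissibleO n S T ∧ S.card + T.card = k then
      (-1 : MvPolynomial (ZMod n ⊕ ZMod n) ℝ) ^ T.card *
        ((∏ i ∈ S, XmonO n i) * ∏ j ∈ T, X (Sum.inl j))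
    else 0

/-! τ reflects the cycle, sending `X_i = x_i y_i x_{i+1}` to `x_{1-i} y_{-i} x_{-i} = X_{-i}`;
so it acts on the admissible monomial indexed by `(S, T)` by `S ↦ -S`, `T ↦ 1 - T`.  This
reflection reverses the differences `j - i` that define consecutiveness, hence preserves
admissibility, weight and sign, and only permutes the terms of `O_k`. -/

namespace AdmissibleO

variable {n : ℕ}

theorem reflect {S T : Finset (ZMod n)} (h : AdmissibleO n S T) :
    AdmissibleO n (S.map (Equiv.neg (ZMod n)).toEmbedding)
      (T.map (Equiv.subLeft (1 : ZMod n)).toEmbedding) := by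
  obtain ⟨hSS, hST, hTT⟩ := h
  simp only [AdmissibleO, Finset.forall_mem_map, Equiv.coe_toEmbedding, Equiv.neg_apply,
    Equiv.subLeft_apply]
  refine ⟨fun i hi j hj hij => ?_, fun i hi j hj => ?_, fun j hj j' hj' hjj' => ?_⟩
  · have := hSS j hj i hi (fun h => hij (by rw [h]))
    exact ⟨fun h => this.1 (by linear_combination h), fun h => this.2 (by linear_combination h)⟩
  · obtain ⟨h₁, h₂, h₃, h₄⟩ := hST i hi j hj
    exact ⟨fun h => h₄ (by linear_combination -h), fun h => h₃ (by linear_combination -h),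
      fun h => h₂ (by linear_combination -h), fun h => h₁ (by linear_combination -h)⟩
  · exact fun h => hTT j' hj' j hj (fun h' => hjj' (by rw [h'])) (by linear_combination h)

theorem reflect_iff {S T : Finset (ZMod n)} :
    AdmissibleO n (S.map (Equiv.neg (ZMod n)).toEmbedding)
      (T.map (Equiv.subLeft (1 : ZMod n)).toEmbedding) ↔ AdmissibleO n S T := by
  refine ⟨fun h => ?_, reflect⟩
  simpa [Finset.map_map] using h.reflect

end AdmissibleO

theorem map_XmonO {n : ℕ}
    (τ : MvPolynomial (ZMod n ⊕ ZMod n) ℝ →ₐ[ℝ] MvPolynomial (ZMod n ⊕ ZMod n) ℝ)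
    (hτx : ∀ i : ZMod n, τ (X (Sum.inl i)) = X (Sum.inl (1 - i)))
    (hτy : ∀ i : ZMod n, τ (X (Sum.inr i)) = X (Sum.inr (-i))) (i : ZMod n) :
    τ (XmonO n i) = XmonO n (-i) := by
  simp only [XmonO, map_mul, hτx, hτy]
  rw [show (1 : ZMod n) - (i + 1) = -i by ring, neg_add_eq_sub]
  ring

theorem stmt_6_general (n : ℕ) [NeZero n]
    (τ : MvPolynomial (ZMod n ⊕ ZMod n) ℝ →ₐ[ℝ] MvPolynomial (ZMod n ⊕ ZMod n) ℝ)
    (hτx : ∀ i : ZMod n, τ (X (Sum.inl i)) = X (Sum.inl (1 - i)))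
    (hτy : ∀ i : ZMod n, τ (X (Sum.inr i)) = X (Sum.inr (-i)))
    (k : ℕ) :
    τ (Opoly n k) = Opoly n k := by
  classical
  rw [Opoly, map_sum]
  refine Fintype.sum_equiv (Equiv.neg (ZMod n)).finsetCongr _ _ fun S => ?_
  rw [map_sum]
  refine Fintype.sum_equiv (Equiv.subLeft (1 : ZMod n)).finsetCongr _ _ fun T => ?_
  simp only [Equiv.finsetCongr_apply, AdmissibleO.reflect_iff, Finset.card_map,
    Finset.prod_map, apply_ite τ, map_mul, map_pow, map_neg, map_one, map_prod, map_zero,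
    map_XmonO τ hτx hτy, hτx, Equiv.coe_toEmbedding, Equiv.neg_apply, Equiv.subLeft_apply]

/-- Lemma 2.6: the involution `τ` determined by `τ(x_i) = x_{1-i}`, `τ(y_i) = y_{-i}`
fixes each monodromy invariant `O_k`, `1 ≤ k ≤ ⌊n/2⌋`. -/
theorem stmt_6 (n : ℕ) [NeZero n] (hn : 5 ≤ n)
    (τ : MvPolynomial (ZMod n ⊕ ZMod n) ℝ →ₐ[ℝ] MvPolynomial (ZMod n ⊕ ZMod n) ℝ)
    (hτx : ∀ i : ZMod n, τ (X (Sum.inl i)) = X (Sum.inl (1 - i)))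
    (hτy : ∀ i : ZMod n, τ (X (Sum.inr i)) = X (Sum.inr (-i)))
    (k : ℕ) (hk1 : 1 ≤ k) (hk2 : k ≤ n / 2) :
    τ (Opoly n k) = Opoly n k :=
  stmt_6_general n τ hτx hτy k
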